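/- There exists a decomposition on the vertex set $\{0,\dots,11\}$ with parts $G_i = \{i, i+3, i+6, i+9\}$ for $i = 0,1,2$, of all edges of the complete tripartite graph except those within the set $S = \{0,1,2\}$, into 9 edge-disjoint copies of $K_4-e$; explicitly the copies $[5,4,0-3]$, $[7,8,0-6]$, $[10,11,0-9]$, $[5,6,1-10]$, $[3,11,1-7]$, $[8,9,1-4]$, $[7,9,2-5]$, $[3,10,2-8]$, $[4,6,2-11]$ work. -/

import Mathlib

open SimpleGraph Finset

/-- `K₄ - e`: the complete graph on `{0,1,2,3}` minus the edge `{2,3}`.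
In the block notation `[a,b,c-d]`, `a = 0`, `b = 1`, `c = 2`, `d = 3`. -/
def K4e : SimpleGraph (Fin 4) where
  Adj x y := x ≠ y ∧ ¬(x = 2 ∧ y = 3) ∧ ¬(x = 3 ∧ y = 2)
  symm := by
    constructor
    intro x y h
    exact ⟨h.1.symm, fun hc => h.2.2 ⟨hc.2, hc.1⟩, fun hc => h.2.1 ⟨hc.2, hc.1⟩⟩
  loopless := ⟨fun x h => h.1 rfl⟩

instance : DecidableRel K4e.Adj :=
  fun x y => inferInstanceAs (Decidable (x ≠ y ∧ ¬(x = 2 ∧ y = 3) ∧ ¬(x = 3 ∧ y = 2)))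

/-- The edge set of the copy of `K₄ - e` with vertices `f 0, f 1, f 2, f 3`. -/
def copyEdges {V : Type*} (f : Fin 4 → V) : Set (Sym2 V) :=
  Sym2.map f '' K4e.edgeSet

/-- `B` is a packing of `H` by edge-disjoint copies of `K₄ - e`. -/
def IsK4ePacking {V : Type*} (H : SimpleGraph V) (B : Finset (Fin 4 → V)) : Prop :=
  (∀ f ∈ B, Function.Injective f) ∧
  (∀ f ∈ B, copyEdges f ⊆ H.edgeSet) ∧
  (∀ f ∈ B, ∀ g ∈ B, f ≠ g → Disjoint (copyEdges f) (copyEdges g))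

/-- The leave of a packing: the edges of `H` covered by no copy. -/
def leave {V : Type*} (H : SimpleGraph V) (B : Finset (Fin 4 → V)) : Set (Sym2 V) :=
  H.edgeSet \ ⋃ f ∈ B, copyEdges f

/-- `B` is a decomposition of `H` into edge-disjoint copies of `K₄ - e`. -/
def IsK4eDecomp {V : Type*} (H : SimpleGraph V) (B : Finset (Fin 4 → V)) : Prop :=
  IsK4ePacking H B ∧ ∀ e ∈ H.edgeSet, ∃ f ∈ B, e ∈ copyEdges f

/-- The complete tripartite graph with parts `{i, i+3, i+6, i+9}`, `0 ≤ i ≤ 2`, on `Fin 12`. -/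
def K3x4 : SimpleGraph (Fin 12) where
  Adj x y := x.val % 3 ≠ y.val % 3
  symm := ⟨fun _ _ h => h.symm⟩
  loopless := ⟨fun _ h => h rfl⟩

/-- `K_{3(4)}` minus the edges within the hole `S = {0,1,2}`. -/
def K3x4holed : SimpleGraph (Fin 12) where
  Adj x y := x.val % 3 ≠ y.val % 3 ∧ ¬(x.val < 3 ∧ y.val < 3)
  symm := ⟨fun _ _ h => ⟨h.1.symm, fun hc => h.2 ⟨hc.2, hc.1⟩⟩⟩
  loopless := ⟨fun _ h => h.1 rfl⟩

instance : DecidableRel K3x4holed.Adj :=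
  fun x y => inferInstanceAs (Decidable (x.val % 3 ≠ y.val % 3 ∧ ¬(x.val < 3 ∧ y.val < 3)))

section

variable {V : Type*} {H : SimpleGraph V} {f g : Fin 4 → V}

theorem mem_copyEdges {a b : V} :
    s(a, b) ∈ copyEdges f ↔ ∃ i j, K4e.Adj i j ∧ f i = a ∧ f j = b := by
  constructor
  · rintro ⟨e, he, hmap⟩
    induction e using Sym2.ind with
    | _ i j =>
      rw [Sym2.map_mk, Sym2.eq_iff] at hmap
      rcases hmap with ⟨hi, hj⟩ | ⟨hj, hi⟩
      · exact ⟨i, j, he, hi, hj⟩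
      · exact ⟨j, i, he.symm, hi, hj⟩
  · rintro ⟨i, j, hij, rfl, rfl⟩
    exact ⟨s(i, j), hij, rfl⟩

theorem copyEdges_subset_edgeSet_iff :
    copyEdges f ⊆ H.edgeSet ↔ ∀ i j, K4e.Adj i j → H.Adj (f i) (f j) := by
  refine ⟨fun h i j hij => h (mem_copyEdges.mpr ⟨i, j, hij, rfl, rfl⟩), ?_⟩
  rintro h _ ⟨e, he, rfl⟩
  induction e using Sym2.ind with
  | _ i j => exact h i j he

/-- One orientation of the shared edge suffices since `K4e.Adj` is symmetric. -/
theorem disjoint_copyEdges_iff :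
    Disjoint (copyEdges f) (copyEdges g) ↔
      ∀ i j k l, K4e.Adj i j → K4e.Adj k l → ¬(f i = g k ∧ f j = g l) := by
  rw [Set.disjoint_left]
  constructor
  · rintro h i j k l hij hkl ⟨hik, hjl⟩
    exact h (mem_copyEdges.mpr ⟨i, j, hij, rfl, rfl⟩)
      (mem_copyEdges.mpr ⟨k, l, hkl, hik.symm, hjl.symm⟩)
  · intro h e hf hg
    induction e using Sym2.ind with
    | _ a b =>
      obtain ⟨i, j, hij, rfl, rfl⟩ := mem_copyEdges.mp hf
      obtain ⟨k, l, hkl, hk, hl⟩ := mem_copyEdges.mp hg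
      exact h i j k l hij hkl ⟨hk.symm, hl.symm⟩

theorem isK4eDecomp_of_adj {B : Finset (Fin 4 → V)}
    (hinj : ∀ f ∈ B, Function.Injective f)
    (hadj : ∀ f ∈ B, ∀ i j, K4e.Adj i j → H.Adj (f i) (f j))
    (hdisj : ∀ f ∈ B, ∀ g ∈ B, f ≠ g →
      ∀ i j k l, K4e.Adj i j → K4e.Adj k l → ¬(f i = g k ∧ f j = g l))
    (hcover : ∀ a b, H.Adj a b → ∃ f ∈ B, ∃ i j, K4e.Adj i j ∧ f i = a ∧ f j = b) :
    IsK4eDecomp H B := by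
  refine ⟨⟨hinj, fun f hf => copyEdges_subset_edgeSet_iff.mpr (hadj f hf),
    fun f hf g hg hfg => disjoint_copyEdges_iff.mpr (hdisj f hf g hg hfg)⟩, ?_⟩
  intro e he
  induction e using Sym2.ind with
  | _ a b =>
    obtain ⟨f, hf, hab⟩ := hcover a b he
    exact ⟨f, hf, mem_copyEdges.mpr hab⟩

end

theorem stmt11 :
    ∃ B : Finset (Fin 4 → Fin 12),
      B = {![5, 4, 0, 3], ![7, 8, 0, 6], ![10, 11, 0, 9], ![5, 6, 1, 10], ![3, 11, 1, 7],
           ![8, 9, 1, 4], ![7, 9, 2, 5], ![3, 10, 2, 8], ![4, 6, 2, 11]} ∧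
      B.card = 9 ∧ IsK4eDecomp K3x4holed B := by
  refine ⟨_, rfl, rfl, isK4eDecomp_of_adj ?_ ?_ ?_ ?_⟩
  · intro f hf
    fin_cases hf <;> decide
  · intro f hf
    fin_cases hf <;> decide
  · intro f hf g hg
    fin_cases hf <;> fin_cases hg <;> decide
  · decide
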